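/- arXiv:2403.04699 — 6 statements merged into one kernel-verified Lean document; each statement's English description precedes it below -/
import Mathlib

section
/- Let N be an odd positive integer. There exists a constant C_P > 0, independent of Δx, such that for all u : ℤ/Nℤ → ℝ with Σ_i Δx u_i = 0, one has ‖u‖₂ ≤ C_P ‖D_x^c u‖₂. -/
noncomputable def Dc (N : ℕ) (Δx : ℝ) (u : ZMod N → ℝ) (i : ZMod N) : ℝ :=
  (u (i + 1) - u (i - 1)) / (2 * Δx)

noncomputable def Dm (N : ℕ) (Δx : ℝ) (u : ZMod N → ℝ) (i : ZMod N) : ℝ :=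
  (u i - u (i - 1)) / Δx

noncomputable def Dp (N : ℕ) (Δx : ℝ) (u : ZMod N → ℝ) (i : ZMod N) : ℝ :=
  (u (i + 1) - u i) / Δx

noncomputable def ip (N : ℕ) [NeZero N] (Δx : ℝ) (u v : ZMod N → ℝ) : ℝ :=
  ∑ i : ZMod N, Δx * u i * v i

/-!
For odd `N`, multiplication by `2` permutes `ZMod N`, and along the reindexing `v j = u (2 j)`
the centered difference of `u` at `2 j + 1` is half the forward difference of `v` at `j`.
So the centered inequality reduces to the forward one, which holds with constant `N Δx = T`:
since `v` has mean zero, `|v i|` is at most the average of the `|v i - v k|`, each bounded by the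
total variation `∑ |v (j + 1) - v j|`, and Cauchy–Schwarz bounds that by the `ℓ²` norm of
the differences.
-/

open Finset

lemma norm_sub_le_sum_norm_sub_succ {E : Type*} [SeminormedAddCommGroup E] {N : ℕ} [NeZero N]
    (v : ZMod N → E) (i k : ZMod N) :
    ‖v i - v k‖ ≤ ∑ j, ‖v (j + 1) - v j‖ := by
  set r := (i - k).val
  have hr : r < N := ZMod.val_lt _
  have hinj : Set.InjOn (fun m : ℕ => k + (m : ZMod N)) (range r) := by
    intro a ha b hb hab
    simp only [coe_range, Set.mem_Iio] at ha hb
    have := congrArg ZMod.val (add_left_cancel hab)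
    rwa [ZMod.val_natCast_of_lt (ha.trans hr), ZMod.val_natCast_of_lt (hb.trans hr)] at this
  calc ‖v i - v k‖ = ‖∑ m ∈ range r, (v (k + ↑(m + 1)) - v (k + ↑m))‖ := by
        rw [sum_range_sub (fun m => v (k + m))]
        simp [r]
    _ ≤ ∑ m ∈ range r, ‖v (k + ↑(m + 1)) - v (k + ↑m)‖ := norm_sum_le _ _
    _ = ∑ j ∈ (range r).image (fun m : ℕ => k + (m : ZMod N)), ‖v (j + 1) - v j‖ := by
        rw [sum_image hinj]
        push_cast
        simp only [add_assoc]
    _ ≤ ∑ j, ‖v (j + 1) - v j‖ := sum_le_univ_sum_of_nonneg fun _ => norm_nonneg _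

lemma abs_le_sum_abs_sub_succ_of_sum_eq_zero {N : ℕ} [NeZero N] (v : ZMod N → ℝ)
    (hv : ∑ j, v j = 0) (i : ZMod N) :
    |v i| ≤ ∑ j, |v (j + 1) - v j| := by
  set S := ∑ j, |v (j + 1) - v j|
  have hN : (0 : ℝ) < N := by exact_mod_cast Nat.pos_of_ne_zero (NeZero.ne N)
  refine le_of_mul_le_mul_left ?_ hN
  calc (N : ℝ) * |v i| = |∑ k, (v i - v k)| := by
        simp [sum_sub_distrib, hv, abs_mul]
    _ ≤ ∑ k, |v i - v k| := abs_sum_le_sum_abs _ _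
    _ ≤ ∑ _k : ZMod N, S := sum_le_sum fun k _ => by
        simpa only [Real.norm_eq_abs] using norm_sub_le_sum_norm_sub_succ v i k
    _ = N * S := by simp

lemma sum_sq_le_sq_mul_sum_sq_sub_succ_of_sum_eq_zero {N : ℕ} [NeZero N] (v : ZMod N → ℝ)
    (hv : ∑ j, v j = 0) :
    ∑ j, v j ^ 2 ≤ (N : ℝ) ^ 2 * ∑ j, (v (j + 1) - v j) ^ 2 := by
  set S := ∑ j, |v (j + 1) - v j|
  have hS : S ^ 2 ≤ N * ∑ j, (v (j + 1) - v j) ^ 2 := by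
    simpa [S, sq_abs] using sq_sum_le_card_mul_sum_sq (s := univ) (f := fun j => |v (j + 1) - v j|)
  calc ∑ j, v j ^ 2 ≤ ∑ _j : ZMod N, S ^ 2 := sum_le_sum fun j _ => by
        rw [← sq_abs]
        exact pow_le_pow_left₀ (abs_nonneg _) (abs_le_sum_abs_sub_succ_of_sum_eq_zero v hv j) 2
    _ = N * S ^ 2 := by simp
    _ ≤ N * (N * ∑ j, (v (j + 1) - v j) ^ 2) := by gcongr
    _ = (N : ℝ) ^ 2 * ∑ j, (v (j + 1) - v j) ^ 2 := by ring

theorem discrete_poincare_Dp {N : ℕ} [NeZero N] {Δx : ℝ} (hΔx : 0 ≤ Δx)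
    (v : ZMod N → ℝ) (hv : ∑ j, v j = 0) :
    ∑ j, Δx * v j ^ 2 ≤ (N * Δx) ^ 2 * ∑ j, Δx * Dp N Δx v j ^ 2 := by
  have hscale : ∀ j,
      (N * Δx) ^ 2 * (Δx * Dp N Δx v j ^ 2) = Δx * (N ^ 2 * (v (j + 1) - v j) ^ 2) := by
    intro j
    rcases eq_or_ne Δx 0 with rfl | h
    · simp
    · simp only [Dp]
      field_simp
  rw [mul_sum, sum_congr rfl fun j _ => hscale j, ← mul_sum, ← mul_sum, ← mul_sum]
  exact mul_le_mul_of_nonneg_left (sum_sq_le_sq_mul_sum_sq_sub_succ_of_sum_eq_zero v hv) hΔx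

lemma Dp_comp_two_mul {N : ℕ} (Δx : ℝ) (u : ZMod N → ℝ) (j : ZMod N) :
    Dp N Δx (fun j => u (2 * j)) j = 2 * Dc N Δx u (2 * j + 1) := by
  simp only [Dp, Dc]
  rw [show 2 * j + 1 + 1 = 2 * (j + 1) by ring, show 2 * j + 1 - 1 = 2 * j by ring]
  ring

lemma ZMod.bijective_two_mul_of_odd {N : ℕ} (hN : Odd N) :
    Function.Bijective (fun j : ZMod N => 2 * j) :=
  IsUnit.isUnit_iff_mulLeft_bijective.mp <| by
    exact_mod_cast (ZMod.isUnit_iff_coprime 2 N).mpr (Nat.coprime_two_left.mpr hN)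

theorem discrete_poincare_Dc_of_odd {N : ℕ} [NeZero N] (hN : Odd N) {Δx : ℝ} (hΔx : 0 ≤ Δx)
    (u : ZMod N → ℝ) (hu : ∑ i, u i = 0) :
    ∑ i, Δx * u i ^ 2 ≤ (2 * N * Δx) ^ 2 * ∑ i, Δx * Dc N Δx u i ^ 2 := by
  have h2 := ZMod.bijective_two_mul_of_odd hN
  have hshift : ∑ j, Δx * Dc N Δx u (2 * j + 1) ^ 2 = ∑ i, Δx * Dc N Δx u i ^ 2 :=
    ((AddGroup.addRight_bijective 1).comp h2).sum_comp fun i => Δx * Dc N Δx u i ^ 2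
  calc ∑ i, Δx * u i ^ 2 = ∑ j, Δx * u (2 * j) ^ 2 :=
        (h2.sum_comp fun i => Δx * u i ^ 2).symm
    _ ≤ (N * Δx) ^ 2 * ∑ j, Δx * Dp N Δx (fun j => u (2 * j)) j ^ 2 :=
        discrete_poincare_Dp hΔx _ ((h2.sum_comp u).trans hu)
    _ = (2 * N * Δx) ^ 2 * ∑ j, Δx * Dc N Δx u (2 * j + 1) ^ 2 := by
        simp only [Dp_comp_two_mul, mul_sum]
        exact sum_congr rfl fun j _ => by ring
    _ = (2 * N * Δx) ^ 2 * ∑ i, Δx * Dc N Δx u i ^ 2 := by rw [hshift]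

theorem discrete_poincare_torus (T : ℝ) (hT : 0 < T) :
    ∃ C > 0, ∀ (N : ℕ) [NeZero N], Odd N →
      ∀ u : ZMod N → ℝ, (∑ i : ZMod N, (T / N) * u i) = 0 →
        Real.sqrt (∑ i : ZMod N, (T / N) * (u i) ^ 2)
          ≤ C * Real.sqrt (∑ i : ZMod N, (T / N) * (Dc N (T / N) u i) ^ 2) := by
  refine ⟨2 * T, by positivity, fun N _ hN u hu => ?_⟩
  have hN0 : (N : ℝ) ≠ 0 := Nat.cast_ne_zero.mpr (NeZero.ne N)
  have hmean : ∑ i, u i = 0 := by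
    rw [← mul_sum] at hu
    exact (mul_eq_zero.mp hu).resolve_left (div_ne_zero hT.ne' hN0)
  have key := discrete_poincare_Dc_of_odd hN (div_nonneg hT.le (Nat.cast_nonneg N)) u hmean
  rw [show 2 * (N : ℝ) * (T / N) = 2 * T by field_simp] at key
  calc Real.sqrt (∑ i, T / N * u i ^ 2)
      ≤ Real.sqrt ((2 * T) ^ 2 * ∑ i, T / N * Dc N (T / N) u i ^ 2) := Real.sqrt_le_sqrt key
    _ = 2 * T * Real.sqrt (∑ i, T / N * Dc N (T / N) u i ^ 2) := by
        rw [Real.sqrt_mul (sq_nonneg _), Real.sqrt_sq (by positivity)]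
end

section
/- Let N be odd. For any u : ℤ/Nℤ → ℝ with Σ_i Δx u_i = 0, there exists a unique Φ : ℤ/Nℤ → ℝ satisfying the discrete Poisson equation (D_x^c D_x^c Φ)_i = -u_i for all i and the normalization Σ_i Δx Φ_i = 0. -/
lemma Dc_add (N : ℕ) (Δx : ℝ) (x y : ZMod N → ℝ) :
    Dc N Δx (x + y) = Dc N Δx x + Dc N Δx y := by
  funext i; simp [Dc]; ring

lemma Dc_smul (N : ℕ) (Δx : ℝ) (a : ℝ) (x : ZMod N → ℝ) :
    Dc N Δx (a • x) = a • Dc N Δx x := by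
  funext i; simp [Dc]; ring

lemma sum_Dc (N : ℕ) [NeZero N] (Δx : ℝ) (v : ZMod N → ℝ) :
    ∑ i : ZMod N, Dc N Δx v i = 0 := by
  have h1 : ∑ i : ZMod N, v (i + 1) = ∑ i : ZMod N, v i :=
    Fintype.sum_equiv (Equiv.addRight 1) _ _ (fun i => rfl)
  have h2 : ∑ i : ZMod N, v (i - 1) = ∑ i : ZMod N, v i :=
    Fintype.sum_equiv (Equiv.subRight 1) _ _ (fun i => rfl)
  simp only [Dc, sub_div, Finset.sum_sub_distrib, ← Finset.sum_div, h1, h2, sub_self,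
    zero_div]

/-- N odd, period 2 implies constant. -/
lemma period_two_const (N : ℕ) [NeZero N] (hN : Odd N) (f : ZMod N → ℝ)
    (h : ∀ i, f (i + 2) = f i) : ∀ i, f i = f 0 := by
  have hnat : ∀ n : ℕ, f ((2 * n : ℕ) : ZMod N) = f 0 := by
    intro n
    induction n with
    | zero => simp
    | succ n ih =>
      have : ((2 * (n + 1) : ℕ) : ZMod N) = ((2 * n : ℕ) : ZMod N) + 2 := by push_cast; ring
      rw [this, h, ih]
  intro i
  have hu : IsUnit (2 : ZMod N) := by
    rw [show (2 : ZMod N) = ((2 : ℕ) : ZMod N) by push_cast; ring]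
    exact (ZMod.isUnit_iff_coprime 2 N).mpr hN.coprime_two_left
  obtain ⟨k, hk⟩ : ∃ k : ZMod N, 2 * k = i := ⟨hu.unit⁻¹ * i, by
    rw [← mul_assoc]
    simp [IsUnit.mul_val_inv, hu.mul_val_inv]⟩
  have : i = ((2 * k.val : ℕ) : ZMod N) := by
    push_cast
    rw [ZMod.natCast_val, ZMod.cast_id, hk]
  rw [this, hnat]

theorem discrete_poisson_exists_unique (N : ℕ) [NeZero N] (hN : Odd N)
    (Δx : ℝ) (hΔx : 0 < Δx) (u : ZMod N → ℝ)
    (hu : (∑ i : ZMod N, Δx * u i) = 0) :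
    ∃! Φ : ZMod N → ℝ,
      (∀ i, Dc N Δx (Dc N Δx Φ) i = -u i) ∧ (∑ i : ZMod N, Δx * Φ i) = 0 := by
  have hΔ : Δx ≠ 0 := ne_of_gt hΔx
  have hNR : (N : ℝ) ≠ 0 := Nat.cast_ne_zero.mpr (NeZero.ne N)
  -- the auxiliary endomorphism
  set M : (ZMod N → ℝ) →ₗ[ℝ] (ZMod N → ℝ) :=
    { toFun := fun Φ => fun i => Dc N Δx (Dc N Δx Φ) i + ∑ j : ZMod N, Φ j
      map_add' := by
        intro x y
        funext i
        simp [Dc_add, Finset.sum_add_distrib]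
        ring
      map_smul' := by
        intro a x
        funext i
        simp only [Dc_smul, Pi.smul_apply, smul_eq_mul, RingHom.id_apply, ← Finset.mul_sum]
        ring } with hM
  -- key: if Dc Dc Φ = 0 then Φ is constant
  have key : ∀ Φ : ZMod N → ℝ, (∀ i, Dc N Δx (Dc N Δx Φ) i = 0) → ∀ i, Φ i = Φ 0 := by
    intro Φ h
    have h2 : ∀ i, Φ (i + 2) - 2 * Φ i + Φ (i - 2) = 0 := by
      intro i
      have := h i
      simp only [Dc] at this
      field_simp at this
      have e1 : i + 1 + 1 = i + 2 := by ring
      have e2 : i + 1 - 1 = i := by ring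
      have e3 : i - 1 + 1 = i := by ring
      have e4 : i - 1 - 1 = i - 2 := by ring
      simp only [e1, e2, e3, e4] at this
      linarith
    -- c i := Φ (i+2) - Φ i has period 2
    have hc : ∀ i, (fun j => Φ (j + 2) - Φ j) i = (fun j => Φ (j + 2) - Φ j) 0 := by
      apply period_two_const N hN
      intro i
      have := h2 (i + 2)
      have e : i + 2 - 2 = i := by ring
      rw [e] at this
      show Φ (i + 2 + 2) - Φ (i + 2) = Φ (i + 2) - Φ i
      linarith
    -- its sum is 0, so it is 0
    have hs : ∑ i : ZMod N, (Φ (i + 2) - Φ i) = 0 := by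
      have := Fintype.sum_equiv (Equiv.addRight 2) (fun i : ZMod N => Φ (i + 2)) Φ
        (fun i => rfl)
      rw [Finset.sum_sub_distrib, this, sub_self]
    have hc0 : Φ (0 + 2) - Φ 0 = 0 := by
      have h' : ∑ i : ZMod N, (Φ (i + 2) - Φ i) = ∑ _i : ZMod N, (Φ (0 + 2) - Φ 0) :=
        Finset.sum_congr rfl fun i _ => hc i
      rw [hs, Finset.sum_const] at h'
      simp only [Finset.card_univ, ZMod.card, nsmul_eq_mul] at h'
      rcases mul_eq_zero.mp h'.symm with h | h
      · exact absurd h hNR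
      · exact h
    -- so Φ has period 2, hence constant
    apply period_two_const N hN
    intro i
    have h3 : Φ (i + 2) - Φ i = Φ (0 + 2) - Φ 0 := hc i
    linarith [hc0]
  -- M is injective
  have hinj : Function.Injective M := by
    rw [← LinearMap.ker_eq_bot, LinearMap.ker_eq_bot']
    intro Φ hΦ
    have hΦ' : ∀ i, Dc N Δx (Dc N Δx Φ) i + ∑ j : ZMod N, Φ j = 0 := by
      intro i; exact congrFun hΦ i
    have hsum : ∑ j : ZMod N, Φ j = 0 := by
      have := Finset.sum_congr rfl (fun i (_ : i ∈ Finset.univ) => hΦ' i)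
      rw [Finset.sum_add_distrib, sum_Dc, Finset.sum_const] at this
      simp only [zero_add, Finset.card_univ, ZMod.card, nsmul_eq_mul,
        Finset.sum_const_zero] at this
      rcases mul_eq_zero.mp this with h | h
      · exact absurd h hNR
      · exact h
    have hz : ∀ i, Dc N Δx (Dc N Δx Φ) i = 0 := by
      intro i; have := hΦ' i; rw [hsum] at this; linarith
    have hconst := key Φ hz
    have : (N : ℝ) * Φ 0 = 0 := by
      have : ∑ i : ZMod N, Φ i = ∑ _i : ZMod N, Φ 0 :=
        Finset.sum_congr rfl fun i _ => hconst i
      rw [hsum, Finset.sum_const] at this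
      simpa using this.symm
    have h0 : Φ 0 = 0 := by
      rcases mul_eq_zero.mp this with h | h
      · exact absurd h hNR
      · exact h
    funext i
    rw [hconst i, h0]; rfl
  have hsurj : Function.Surjective M := LinearMap.injective_iff_surjective.mp hinj
  obtain ⟨Φ, hΦ⟩ := hsurj (fun i => -u i)
  have hΦ' : ∀ i, Dc N Δx (Dc N Δx Φ) i + ∑ j : ZMod N, Φ j = -u i := by
    intro i; exact congrFun hΦ i
  have husum : ∑ i : ZMod N, u i = 0 := by
    rw [← Finset.mul_sum] at hu
    exact (mul_eq_zero.mp hu).resolve_left hΔ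
  have hsumΦ : ∑ j : ZMod N, Φ j = 0 := by
    have := Finset.sum_congr rfl (fun i (_ : i ∈ Finset.univ) => hΦ' i)
    rw [Finset.sum_add_distrib, sum_Dc, Finset.sum_const, Finset.sum_neg_distrib, husum] at this
    simp only [zero_add, neg_zero, Finset.card_univ, ZMod.card, nsmul_eq_mul] at this
    rcases mul_eq_zero.mp this with h | h
    · exact absurd h hNR
    · exact h
  refine ⟨Φ, ⟨fun i => by have := hΦ' i; rw [hsumΦ] at this; linarith,
      by rw [← Finset.mul_sum, hsumΦ, mul_zero]⟩, ?_⟩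
  intro Ψ ⟨hΨ1, hΨ2⟩
  have hΨsum : ∑ j : ZMod N, Ψ j = 0 := by
    rw [← Finset.mul_sum] at hΨ2
    exact (mul_eq_zero.mp hΨ2).resolve_left hΔ
  apply hinj
  funext i
  simp only [hM, LinearMap.coe_mk, AddHom.coe_mk]
  rw [hΨ1 i, hΨsum, hΦ' i]
  ring
end

section
/- Let L F = (-ρ∞ χ₁ ρ_g - ρ∞⁻¹ f, -ρ∞⁻¹ χ₂ ρ_f - ρ∞ g) be the linearized collision operator and Π F = ((ρ_f - ρ_g)/(ρ∞²+1)) (ρ∞² χ₁, -χ₂) the projection onto its kernel. Then for every F = (f,g) in the weighted space H, one has -⟨LF, F⟩ ≥ min(ρ∞, ρ∞⁻¹) ‖(I - Π)F‖². -/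
/-- Discrete macroscopic density. -/
noncomputable def rhoD (N : ℕ) (J : Type*) [Fintype J] (Δv : ℝ)
    (f : ZMod N → J → ℝ) (i : ZMod N) : ℝ := ∑ j : J, Δv * f i j

/-- Discrete weighted inner product ⟨F₁,F₂⟩_Δ on pairs F_k = (f_k, g_k). -/
noncomputable def ipD (N : ℕ) [NeZero N] (J : Type*) [Fintype J] (Δx Δv ρ : ℝ)
    (χ1 χ2 : J → ℝ) (f1 g1 f2 g2 : ZMod N → J → ℝ) : ℝ :=
  ∑ i : ZMod N, ∑ j : J, Δx * Δv *
    (f1 i j * f2 i j / (χ1 j * ρ) + g1 i j * g2 i j * ρ / χ2 j)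

/-- First component of the projection Π onto the kernel of the linearized collision operator. -/
noncomputable def Pf (N : ℕ) (J : Type*) [Fintype J] (Δv ρ : ℝ) (χ1 : J → ℝ)
    (f g : ZMod N → J → ℝ) (i : ZMod N) (j : J) : ℝ :=
  (rhoD N J Δv f i - rhoD N J Δv g i) / (ρ ^ 2 + 1) * (ρ ^ 2 * χ1 j)

/-- Second component of the projection Π. -/
noncomputable def Pg (N : ℕ) (J : Type*) [Fintype J] (Δv ρ : ℝ) (χ2 : J → ℝ)
    (f g : ZMod N → J → ℝ) (i : ZMod N) (j : J) : ℝ :=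
  (rhoD N J Δv f i - rhoD N J Δv g i) / (ρ ^ 2 + 1) * (-χ2 j)

set_option maxHeartbeats 1000000 in
/-- Microscopic coercivity (discrete version): -⟨LF,F⟩_Δ ≥ min(ρ∞,ρ∞⁻¹)‖(I-Π)F‖_Δ². -/
theorem microscopic_coercivity (N : ℕ) [NeZero N] (J : Type*) [Fintype J]
    (Δx Δv ρ : ℝ) (hΔx : 0 < Δx) (hΔv : 0 < Δv) (hρ : 0 < ρ)
    (χ1 χ2 : J → ℝ) (hχ1 : ∀ j, 0 < χ1 j) (hχ2 : ∀ j, 0 < χ2 j)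
    (hm1 : (∑ j : J, Δv * χ1 j) = 1) (hm2 : (∑ j : J, Δv * χ2 j) = 1)
    (f g : ZMod N → J → ℝ) :
    -(ipD N J Δx Δv ρ χ1 χ2
        (fun i j => -ρ * χ1 j * rhoD N J Δv g i - ρ⁻¹ * f i j)
        (fun i j => -ρ⁻¹ * χ2 j * rhoD N J Δv f i - ρ * g i j)
        f g)
      ≥ min ρ ρ⁻¹ *
        ipD N J Δx Δv ρ χ1 χ2
          (fun i j => f i j - Pf N J Δv ρ χ1 f g i j)
          (fun i j => g i j - Pg N J Δv ρ χ2 f g i j)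
          (fun i j => f i j - Pf N J Δv ρ χ1 f g i j)
          (fun i j => g i j - Pg N J Δv ρ χ2 f g i j) := by
  have hρ0 : ρ ≠ 0 := ne_of_gt hρ
  rw [ge_iff_le, ipD, ipD, Finset.mul_sum, ← Finset.sum_neg_distrib]
  apply Finset.sum_le_sum
  intro i _
  simp only [Pf, Pg]
  set a := rhoD N J Δv f i with ha
  set b := rhoD N J Δv g i with hb
  set u := (a - b) / (ρ ^ 2 + 1) with hu'
  have hs1 : (ρ:ℝ)^2 + 1 ≠ 0 := by positivity
  have hu : u * (ρ^2 + 1) = a - b := by rw [hu']; field_simp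
  set A := ∑ j : J, Δv * ((f i j)^2 / χ1 j) with hA
  set B := ∑ j : J, Δv * ((g i j)^2 / χ2 j) with hB
  have e1 : ∀ (c : ℝ) (h : J → ℝ), (∑ j : J, c * h j) = c * ∑ j : J, h j :=
    fun c h => (Finset.mul_sum _ _ _).symm
  have expand : ∀ c1 c2 c3 c4 c5 c6 : ℝ,
      (∑ j : J, (c1*(Δv*χ1 j) + c2*(Δv*χ2 j) + c3*(Δv*f i j) + c4*(Δv*g i j)
        + c5*(Δv*((f i j)^2/χ1 j)) + c6*(Δv*((g i j)^2/χ2 j))))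
      = c1 + c2 + c3*a + c4*b + c5*A + c6*B := by
    intro c1 c2 c3 c4 c5 c6
    rw [Finset.sum_add_distrib, Finset.sum_add_distrib, Finset.sum_add_distrib,
      Finset.sum_add_distrib, Finset.sum_add_distrib,
      e1 c1 (fun j => Δv * χ1 j), e1 c2 (fun j => Δv * χ2 j),
      e1 c3 (fun j => Δv * f i j), e1 c4 (fun j => Δv * g i j),
      e1 c5 (fun j => Δv * ((f i j)^2 / χ1 j)), e1 c6 (fun j => Δv * ((g i j)^2 / χ2 j)),
      hm1, hm2]
    simp only [ha, hb, hA, hB, rhoD]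
    ring
  have hY : (∑ j : J, Δx * Δv *
      ((-ρ * χ1 j * b - ρ⁻¹ * f i j) * f i j / (χ1 j * ρ)
        + (-ρ⁻¹ * χ2 j * a - ρ * g i j) * g i j * ρ / χ2 j))
      = Δx * (0 + 0 + (-b)*a + (-a)*b + (-(ρ⁻¹*ρ⁻¹))*A + (-(ρ*ρ))*B) := by
    rw [← expand, Finset.mul_sum]
    apply Finset.sum_congr rfl
    intro j _
    have h1 := (hχ1 j).ne'
    have h2 := (hχ2 j).ne'
    field_simp
    ring
  have hX : (∑ j : J, Δx * Δv *
      ((f i j - u * (ρ ^ 2 * χ1 j)) * (f i j - u * (ρ ^ 2 * χ1 j)) / (χ1 j * ρ)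
        + (g i j - u * (-χ2 j)) * (g i j - u * (-χ2 j)) * ρ / χ2 j))
      = Δx * ((u*u*(ρ*ρ*ρ)) + (u*u*ρ) + (-(2*u*ρ))*a + (2*u*ρ)*b + ρ⁻¹*A + ρ*B) := by
    rw [← expand, Finset.mul_sum]
    apply Finset.sum_congr rfl
    intro j _
    have h1 := (hχ1 j).ne'
    have h2 := (hχ2 j).ne'
    field_simp
    ring
  have hCS1 : a * a ≤ A := by
    have h0 : (0:ℝ) ≤ ∑ j : J, Δv * χ1 j * (f i j / χ1 j - a)^2 :=
      Finset.sum_nonneg (fun j _ =>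
        mul_nonneg (mul_nonneg hΔv.le (hχ1 j).le) (sq_nonneg _))
    have he : (∑ j : J, Δv * χ1 j * (f i j / χ1 j - a)^2)
        = (a*a) + 0 + (-(2*a))*a + 0*b + 1*A + 0*B := by
      rw [← expand]
      apply Finset.sum_congr rfl
      intro j _
      have h1 := (hχ1 j).ne'
      have h2 := (hχ2 j).ne'
      simp only [zero_mul, mul_zero, add_zero, zero_add]
      field_simp
      ring
    rw [he] at h0; linarith
  have hCS2 : b * b ≤ B := by
    have h0 : (0:ℝ) ≤ ∑ j : J, Δv * χ2 j * (g i j / χ2 j - b)^2 :=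
      Finset.sum_nonneg (fun j _ =>
        mul_nonneg (mul_nonneg hΔv.le (hχ2 j).le) (sq_nonneg _))
    have he : (∑ j : J, Δv * χ2 j * (g i j / χ2 j - b)^2)
        = 0 + (b*b) + 0*a + (-(2*b))*b + 0*A + 1*B := by
      rw [← expand]
      apply Finset.sum_congr rfl
      intro j _
      have h1 := (hχ1 j).ne'
      have h2 := (hχ2 j).ne'
      simp only [zero_mul, mul_zero, add_zero, zero_add]
      field_simp
      ring
    rw [he] at h0; linarith
  rw [hX, hY]
  clear_value a b u A B
  clear hX hY expand e1 ha hb hA hB hu' hχ1 hχ2 hm1 hm2 f g χ1 χ2 hΔv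
  have hr : ρ * ρ⁻¹ = 1 := mul_inv_cancel₀ hρ0
  have hrpos : 0 < ρ⁻¹ := inv_pos.mpr hρ
  have hs1p : (0:ℝ) < ρ^2 + 1 := by positivity
  have hu2 : (u*(ρ^2+1))*(u*(ρ^2+1)) = (a-b)*(a-b) := by rw [hu]
  rcases le_total ρ 1 with hc | hc
  · -- ρ ≤ 1, min = ρ
    have hle : ρ ≤ ρ⁻¹ := by
      nlinarith [mul_nonneg (sub_nonneg.mpr hc) hrpos.le]
    rw [min_eq_left hle]
    have hρ2 : (0:ℝ) < ρ^2 := by positivity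
    have hT : (ρ^2+1) * (2*a*b*ρ^2 + (1-ρ^2)*(a*a) + u*u*ρ^4*(ρ^2+1))
        = (a + ρ^2*b)^2 := by
      linear_combination ρ^4 * hu2
    have hT0 : 0 ≤ 2*a*b*ρ^2 + (1-ρ^2)*(a*a) + u*u*ρ^4*(ρ^2+1) := by
      nlinarith [hT, sq_nonneg (a + ρ^2*b)]
    have h1 : (0:ℝ) ≤ 1 - ρ^2 := by nlinarith
    have h2 : (1-ρ^2)*(a*a) ≤ (1-ρ^2)*A := mul_le_mul_of_nonneg_left hCS1 h1
    have hstep : 0 ≤ 2*a*b*ρ^2 + (1-ρ^2)*A + u*u*ρ^4*(ρ^2+1) := by linarith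
    have hD : ρ^2 * ((2*a*b + ρ⁻¹*ρ⁻¹*A + ρ*ρ*B)
        - ρ*(u*u*(ρ*ρ*ρ) + u*u*ρ + (-(2*u*ρ))*a + (2*u*ρ)*b + ρ⁻¹*A + ρ*B))
        = 2*a*b*ρ^2 + (1-ρ^2)*A + u*u*ρ^4*(ρ^2+1) := by
      linear_combination (A*(ρ*ρ⁻¹+1-ρ^2)) * hr + (-(2*u*ρ^4)) * hu
    have key : ρ*(u*u*(ρ*ρ*ρ) + u*u*ρ + (-(2*u*ρ))*a + (2*u*ρ)*b + ρ⁻¹*A + ρ*B)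
        ≤ 2*a*b + ρ⁻¹*ρ⁻¹*A + ρ*ρ*B := by
      have h4 : 0 ≤ ρ^2 * ((2*a*b + ρ⁻¹*ρ⁻¹*A + ρ*ρ*B)
          - ρ*(u*u*(ρ*ρ*ρ) + u*u*ρ + (-(2*u*ρ))*a + (2*u*ρ)*b + ρ⁻¹*A + ρ*B)) := by
        rw [hD]; exact hstep
      have h5 := (mul_nonneg_iff_of_pos_left hρ2).mp h4
      linarith
    calc ρ * (Δx * ((u*u*(ρ*ρ*ρ)) + (u*u*ρ) + (-(2*u*ρ))*a + (2*u*ρ)*b + ρ⁻¹*A + ρ*B))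
        = Δx * (ρ * (u*u*(ρ*ρ*ρ) + u*u*ρ + (-(2*u*ρ))*a + (2*u*ρ)*b + ρ⁻¹*A + ρ*B)) := by
          ring
      _ ≤ Δx * (2*a*b + ρ⁻¹*ρ⁻¹*A + ρ*ρ*B) := mul_le_mul_of_nonneg_left key hΔx.le
      _ = -(Δx * (0 + 0 + (-b)*a + (-a)*b + (-(ρ⁻¹*ρ⁻¹))*A + (-(ρ*ρ))*B)) := by ring
  · -- 1 ≤ ρ, min = ρ⁻¹
    have hle : ρ⁻¹ ≤ ρ := by
      nlinarith [mul_nonneg (sub_nonneg.mpr hc) hrpos.le]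
    rw [min_eq_right hle]
    have hT : (ρ^2+1) * (2*a*b + (ρ^2-1)*(b*b) + u*u*(ρ^2+1))
        = (a + ρ^2*b)^2 := by
      linear_combination hu2
    have hT0 : 0 ≤ 2*a*b + (ρ^2-1)*(b*b) + u*u*(ρ^2+1) := by
      nlinarith [hT, sq_nonneg (a + ρ^2*b)]
    have h1 : (0:ℝ) ≤ ρ^2 - 1 := by nlinarith
    have h2 : (ρ^2-1)*(b*b) ≤ (ρ^2-1)*B := mul_le_mul_of_nonneg_left hCS2 h1
    have hD : (2*a*b + ρ⁻¹*ρ⁻¹*A + ρ*ρ*B)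
        - ρ⁻¹*(u*u*(ρ*ρ*ρ) + u*u*ρ + (-(2*u*ρ))*a + (2*u*ρ)*b + ρ⁻¹*A + ρ*B)
        = 2*a*b + (ρ^2-1)*B + u*u*(ρ^2+1) := by
      linear_combination (u*u*(ρ^2+1) - B) * hr + (-(2*u*(ρ*ρ⁻¹))) * hu
    have key : ρ⁻¹*(u*u*(ρ*ρ*ρ) + u*u*ρ + (-(2*u*ρ))*a + (2*u*ρ)*b + ρ⁻¹*A + ρ*B)
        ≤ 2*a*b + ρ⁻¹*ρ⁻¹*A + ρ*ρ*B := by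
      linarith [hD, hT0, h2]
    calc ρ⁻¹ * (Δx * ((u*u*(ρ*ρ*ρ)) + (u*u*ρ) + (-(2*u*ρ))*a + (2*u*ρ)*b + ρ⁻¹*A + ρ*B))
        = Δx * (ρ⁻¹ * (u*u*(ρ*ρ*ρ) + u*u*ρ + (-(2*u*ρ))*a + (2*u*ρ)*b + ρ⁻¹*A + ρ*B)) := by
          ring
      _ ≤ Δx * (2*a*b + ρ⁻¹*ρ⁻¹*A + ρ*ρ*B) := mul_le_mul_of_nonneg_left key hΔx.le
      _ = -(Δx * (0 + 0 + (-b)*a + (-a)*b + (-(ρ⁻¹*ρ⁻¹))*A + (-(ρ*ρ))*B)) := by ring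
end

section
/- The map Π defined by (ΠF)_{ij} = ((ρ_{f,i} - ρ_{g,i})/(ρ∞²+1)) (ρ∞² χ_{1,j}, -χ_{2,j}) is an orthogonal projection with respect to the discrete weighted inner product ⟨F₁,F₂⟩_Δ = Σ_{i,j} ΔxΔv (f₁f₂/(χ_{1,j}ρ∞) + g₁g₂ρ∞/χ_{2,j}): it satisfies Π² = Π and ⟨ΠF₁, F₂⟩_Δ = ⟨F₁, ΠF₂⟩_Δ. -/
lemma rho_diff (N : ℕ) (J : Type*) [Fintype J] (Δv ρ : ℝ) (hρ : ρ ^ 2 + 1 ≠ 0)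
    (χ1 χ2 : J → ℝ)
    (hm1 : (∑ j : J, Δv * χ1 j) = 1) (hm2 : (∑ j : J, Δv * χ2 j) = 1)
    (f g : ZMod N → J → ℝ) (i : ZMod N) :
    rhoD N J Δv (Pf N J Δv ρ χ1 f g) i - rhoD N J Δv (Pg N J Δv ρ χ2 f g) i
      = rhoD N J Δv f i - rhoD N J Δv g i := by
  have h1 : rhoD N J Δv (Pf N J Δv ρ χ1 f g) i
      = (rhoD N J Δv f i - rhoD N J Δv g i) / (ρ ^ 2 + 1) * ρ ^ 2 := by
    simp only [rhoD, Pf]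
    have e : (∑ j : J, Δv * ((∑ j : J, Δv * f i j - ∑ j : J, Δv * g i j) / (ρ ^ 2 + 1)
        * (ρ ^ 2 * χ1 j))) = ((∑ j : J, Δv * f i j - ∑ j : J, Δv * g i j) / (ρ ^ 2 + 1)
        * ρ ^ 2) * ∑ j : J, Δv * χ1 j := by
      rw [Finset.mul_sum]; exact Finset.sum_congr rfl fun j _ => by ring
    rw [e, hm1, mul_one]
  have h2 : rhoD N J Δv (Pg N J Δv ρ χ2 f g) i
      = -((rhoD N J Δv f i - rhoD N J Δv g i) / (ρ ^ 2 + 1)) := by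
    simp only [rhoD, Pg]
    have e : (∑ j : J, Δv * ((∑ j : J, Δv * f i j - ∑ j : J, Δv * g i j) / (ρ ^ 2 + 1)
        * (-χ2 j))) = (-((∑ j : J, Δv * f i j - ∑ j : J, Δv * g i j) / (ρ ^ 2 + 1)))
        * ∑ j : J, Δv * χ2 j := by
      rw [Finset.mul_sum]; exact Finset.sum_congr rfl fun j _ => by ring
    rw [e, hm2, mul_one]
  rw [h1, h2]
  field_simp
  ring

lemma ip_row (N : ℕ) (J : Type*) [Fintype J] (Δx Δv ρ : ℝ) (hρ : ρ ≠ 0) (hρ2 : ρ ^ 2 + 1 ≠ 0)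
    (χ1 χ2 : J → ℝ) (hχ1 : ∀ j, χ1 j ≠ 0) (hχ2 : ∀ j, χ2 j ≠ 0)
    (f1 g1 f2 g2 : ZMod N → J → ℝ) (i : ZMod N) :
    (∑ j : J, Δx * Δv * (Pf N J Δv ρ χ1 f1 g1 i j * f2 i j / (χ1 j * ρ)
        + Pg N J Δv ρ χ2 f1 g1 i j * g2 i j * ρ / χ2 j))
      = Δx * ρ / (ρ ^ 2 + 1) * (rhoD N J Δv f1 i - rhoD N J Δv g1 i)
          * (rhoD N J Δv f2 i - rhoD N J Δv g2 i) := by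
  have : ∀ j : J, Δx * Δv * (Pf N J Δv ρ χ1 f1 g1 i j * f2 i j / (χ1 j * ρ)
        + Pg N J Δv ρ χ2 f1 g1 i j * g2 i j * ρ / χ2 j)
      = Δx * ρ / (ρ ^ 2 + 1) * (rhoD N J Δv f1 i - rhoD N J Δv g1 i)
          * (Δv * f2 i j - Δv * g2 i j) := by
    intro j
    simp only [Pf, Pg]
    field_simp [hχ1 j, hχ2 j, hρ]
    ring
  rw [Finset.sum_congr rfl fun j _ => this j, ← Finset.mul_sum,
    Finset.sum_sub_distrib]
  rfl

/-- Π is an orthogonal projection: Π² = Π and Π is self-adjoint for ⟨·,·⟩_Δ. -/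
theorem Pi_orthogonal_projection (N : ℕ) [NeZero N] (J : Type*) [Fintype J]
    (Δx Δv ρ : ℝ) (hΔx : 0 < Δx) (hΔv : 0 < Δv) (hρ : 0 < ρ)
    (χ1 χ2 : J → ℝ) (hχ1 : ∀ j, 0 < χ1 j) (hχ2 : ∀ j, 0 < χ2 j)
    (hm1 : (∑ j : J, Δv * χ1 j) = 1) (hm2 : (∑ j : J, Δv * χ2 j) = 1) :
    (∀ f g : ZMod N → J → ℝ, ∀ i j,
        Pf N J Δv ρ χ1 (Pf N J Δv ρ χ1 f g) (Pg N J Δv ρ χ2 f g) i j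
          = Pf N J Δv ρ χ1 f g i j ∧
        Pg N J Δv ρ χ2 (Pf N J Δv ρ χ1 f g) (Pg N J Δv ρ χ2 f g) i j
          = Pg N J Δv ρ χ2 f g i j) ∧
    (∀ f1 g1 f2 g2 : ZMod N → J → ℝ,
        ipD N J Δx Δv ρ χ1 χ2 (Pf N J Δv ρ χ1 f1 g1) (Pg N J Δv ρ χ2 f1 g1) f2 g2
          = ipD N J Δx Δv ρ χ1 χ2 f1 g1
              (Pf N J Δv ρ χ1 f2 g2) (Pg N J Δv ρ χ2 f2 g2)) := by
  have hρ2 : ρ ^ 2 + 1 ≠ 0 := by positivity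
  constructor
  · intro f g i j
    constructor
    · rw [Pf, rho_diff N J Δv ρ hρ2 χ1 χ2 hm1 hm2 f g i]; rfl
    · rw [Pg, rho_diff N J Δv ρ hρ2 χ1 χ2 hm1 hm2 f g i]; rfl
  · intro f1 g1 f2 g2
    have hsym : ∀ i, (∑ j : J, Δx * Δv * (f1 i j * Pf N J Δv ρ χ1 f2 g2 i j / (χ1 j * ρ)
          + g1 i j * Pg N J Δv ρ χ2 f2 g2 i j * ρ / χ2 j))
        = Δx * ρ / (ρ ^ 2 + 1) * (rhoD N J Δv f2 i - rhoD N J Δv g2 i)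
            * (rhoD N J Δv f1 i - rhoD N J Δv g1 i) := by
      intro i
      rw [← ip_row N J Δx Δv ρ hρ.ne' hρ2 χ1 χ2 (fun j => (hχ1 j).ne') (fun j => (hχ2 j).ne')
        f2 g2 f1 g1 i]
      exact Finset.sum_congr rfl fun j _ => by ring
    simp only [ipD]
    rw [Finset.sum_congr rfl fun i _ => ip_row N J Δx Δv ρ hρ.ne' hρ2 χ1 χ2
      (fun j => (hχ1 j).ne') (fun j => (hχ2 j).ne') f1 g1 f2 g2 i,
      Finset.sum_congr rfl fun i _ => hsym i]
    exact Finset.sum_congr rfl fun i _ => by ring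
end

section
/- If the velocity nodes satisfy the symmetry Σ_j Δv v_j χ_{k,j} = 0 for k = 1,2, then the first moment J_h satisfies the improved bound ‖J_h‖₂ ≤ √(2 max(ρ∞ D₁^Δ, ρ∞⁻¹ D₂^Δ)) ‖(I - Π)F‖_Δ. -/
/-!
The hydrodynamic part `ΠF` is a multiple of `(χ₁, -χ₂)`, so by the symmetry of the nodes it has
no first moment: `J_h` is the first moment of the microscopic part `(F, G) = (I - Π)F` alone.
At each node, a Cauchy–Schwarz inequality with weights `χ₁ρ` and `χ₂/ρ` bounds the first moments
of `F` and `G` by `ρD₁` resp. `ρ⁻¹D₂` times their contributions to `‖(I - Π)F‖²_Δ`, and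
`(a - b)² ≤ 2(a² + b²)` combines the two.
-/

open Finset

theorem sq_sum_mul_le_sum_mul_sum_div {ι R : Type*} [Field R] [LinearOrder R]
    [IsStrictOrderedRing R] (s : Finset ι) {c w : ι → R} (x y : ι → R)
    (hc : ∀ i ∈ s, 0 ≤ c i) (hw : ∀ i ∈ s, 0 < w i) :
    (∑ i ∈ s, c i * x i * y i) ^ 2
      ≤ (∑ i ∈ s, c i * x i ^ 2 * w i) * ∑ i ∈ s, c i * (y i * y i / w i) := by
  refine sum_sq_le_sum_mul_sum_of_sq_le_mul s
    (fun i hi => by have := hc i hi; have := hw i hi; positivity)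
    (fun i hi => mul_nonneg (hc i hi) (div_nonneg (mul_self_nonneg _) (hw i hi).le))
    (fun i hi => le_of_eq ?_)
  field_simp [(hw i hi).ne']

theorem sum_moment_sub_proj (N : ℕ) (J : Type*) [Fintype J] {Δv ρ : ℝ} {v χ1 χ2 : J → ℝ}
    (hv1 : ∑ j : J, Δv * v j * χ1 j = 0) (hv2 : ∑ j : J, Δv * v j * χ2 j = 0)
    (f g : ZMod N → J → ℝ) (i : ZMod N) :
    ∑ j : J, Δv * v j * ((f i j - Pf N J Δv ρ χ1 f g i j) - (g i j - Pg N J Δv ρ χ2 f g i j))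
      = ∑ j : J, Δv * v j * (f i j - g i j) := by
  set c := (rhoD N J Δv f i - rhoD N J Δv g i) / (ρ ^ 2 + 1)
  have hterm : ∀ j : J,
      Δv * v j * ((f i j - Pf N J Δv ρ χ1 f g i j) - (g i j - Pg N J Δv ρ χ2 f g i j))
        = Δv * v j * (f i j - g i j) - c * ρ ^ 2 * (Δv * v j * χ1 j) - c * (Δv * v j * χ2 j) := by
    intro j
    simp only [Pf, Pg, c]
    ring
  simp only [hterm, sum_sub_distrib, ← mul_sum, hv1, hv2, mul_zero, sub_zero]

theorem sq_sum_moment_sub_le {J : Type*} [Fintype J] {Δv ρ : ℝ} {v χ1 χ2 : J → ℝ}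
    (hΔv : 0 ≤ Δv) (hρ : 0 < ρ) (hχ1 : ∀ j, 0 < χ1 j) (hχ2 : ∀ j, 0 < χ2 j) (F G : J → ℝ) :
    (∑ j : J, Δv * v j * (F j - G j)) ^ 2
      ≤ 2 * max (ρ * ∑ j : J, Δv * v j ^ 2 * χ1 j) (ρ⁻¹ * ∑ j : J, Δv * v j ^ 2 * χ2 j) *
        ∑ j : J, Δv * (F j * F j / (χ1 j * ρ) + G j * G j * ρ / χ2 j) := by
  set A := ∑ j : J, Δv * v j * F j
  set B := ∑ j : J, Δv * v j * G j
  set a := ∑ j : J, Δv * (F j * F j / (χ1 j * ρ))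
  set b := ∑ j : J, Δv * (G j * G j * ρ / χ2 j)
  set M := max (ρ * ∑ j : J, Δv * v j ^ 2 * χ1 j) (ρ⁻¹ * ∑ j : J, Δv * v j ^ 2 * χ2 j)
  have hA : A ^ 2 ≤ (ρ * ∑ j : J, Δv * v j ^ 2 * χ1 j) * a := by
    have hweight : ∑ j : J, Δv * v j ^ 2 * (χ1 j * ρ) = ρ * ∑ j : J, Δv * v j ^ 2 * χ1 j := by
      rw [mul_sum]; exact sum_congr rfl fun j _ => by ring
    simpa only [hweight] using sq_sum_mul_le_sum_mul_sum_div univ (c := fun _ => Δv)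
      (w := fun j => χ1 j * ρ) v F (fun _ _ => hΔv) (fun j _ => mul_pos (hχ1 j) hρ)
  have hB : B ^ 2 ≤ (ρ⁻¹ * ∑ j : J, Δv * v j ^ 2 * χ2 j) * b := by
    have hweight : ∑ j : J, Δv * v j ^ 2 * (χ2 j / ρ) = ρ⁻¹ * ∑ j : J, Δv * v j ^ 2 * χ2 j := by
      rw [mul_sum]; exact sum_congr rfl fun j _ => by ring
    simpa only [hweight, div_div_eq_mul_div] using sq_sum_mul_le_sum_mul_sum_div univ
      (c := fun _ => Δv) (w := fun j => χ2 j / ρ) v G (fun _ _ => hΔv)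
      (fun j _ => div_pos (hχ2 j) hρ)
  have ha : 0 ≤ a := sum_nonneg fun j _ =>
    mul_nonneg hΔv (div_nonneg (mul_self_nonneg _) (mul_pos (hχ1 j) hρ).le)
  have hb : 0 ≤ b := sum_nonneg fun j _ =>
    mul_nonneg hΔv (div_nonneg (mul_nonneg (mul_self_nonneg _) hρ.le) (hχ2 j).le)
  have hA' : A ^ 2 ≤ M * a := hA.trans (mul_le_mul_of_nonneg_right (le_max_left _ _) ha)
  have hB' : B ^ 2 ≤ M * b := hB.trans (mul_le_mul_of_nonneg_right (le_max_right _ _) hb)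
  have hsplit : ∑ j : J, Δv * v j * (F j - G j) = A - B := by
    simp only [A, B, ← sum_sub_distrib, mul_sub]
  rw [hsplit, show ∑ j : J, Δv * (F j * F j / (χ1 j * ρ) + G j * G j * ρ / χ2 j) = a + b by
    simp only [a, b, ← sum_add_distrib, mul_add]]
  nlinarith [sq_nonneg (A + B)]

theorem ipD_self_eq_sum (N : ℕ) [NeZero N] (J : Type*) [Fintype J] (Δx Δv ρ : ℝ)
    (χ1 χ2 : J → ℝ) (F G : ZMod N → J → ℝ) :
    ipD N J Δx Δv ρ χ1 χ2 F G F G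
      = ∑ i : ZMod N, Δx *
          ∑ j : J, Δv * (F i j * F i j / (χ1 j * ρ) + G i j * G i j * ρ / χ2 j) := by
  simp only [ipD, mul_sum, mul_assoc]

/-- Improved first moment estimate: ‖J_h‖₂ ≤ √(2 max(ρ∞ D₁^Δ, ρ∞⁻¹ D₂^Δ)) ‖(I-Π)F‖_Δ. -/
theorem first_moment_estimate_micro (N : ℕ) [NeZero N] (J : Type*) [Fintype J]
    (Δx Δv ρ : ℝ) (hΔx : 0 < Δx) (hΔv : 0 < Δv) (hρ : 0 < ρ)
    (v : J → ℝ) (χ1 χ2 : J → ℝ) (hχ1 : ∀ j, 0 < χ1 j) (hχ2 : ∀ j, 0 < χ2 j)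
    (hv1 : (∑ j : J, Δv * v j * χ1 j) = 0) (hv2 : (∑ j : J, Δv * v j * χ2 j) = 0)
    (f g : ZMod N → J → ℝ) :
    Real.sqrt (∑ i : ZMod N, Δx * (∑ j : J, Δv * v j * (f i j - g i j)) ^ 2)
      ≤ Real.sqrt (2 * max (ρ * ∑ j : J, Δv * (v j) ^ 2 * χ1 j)
            (ρ⁻¹ * ∑ j : J, Δv * (v j) ^ 2 * χ2 j)) *
        Real.sqrt (ipD N J Δx Δv ρ χ1 χ2
          (fun i j => f i j - Pf N J Δv ρ χ1 f g i j)
          (fun i j => g i j - Pg N J Δv ρ χ2 f g i j)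
          (fun i j => f i j - Pf N J Δv ρ χ1 f g i j)
          (fun i j => g i j - Pg N J Δv ρ χ2 f g i j)) := by
  have hD1 : 0 ≤ ∑ j : J, Δv * v j ^ 2 * χ1 j :=
    sum_nonneg fun j _ => by have := hχ1 j; positivity
  have hM : 0 ≤ 2 * max (ρ * ∑ j : J, Δv * v j ^ 2 * χ1 j) (ρ⁻¹ * ∑ j : J, Δv * v j ^ 2 * χ2 j) :=
    mul_nonneg zero_le_two (le_max_of_le_left (mul_nonneg hρ.le hD1))
  rw [← Real.sqrt_mul hM, ipD_self_eq_sum, mul_sum]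
  refine Real.sqrt_le_sqrt (sum_le_sum fun i _ => ?_)
  rw [mul_left_comm, ← sum_moment_sub_proj N J hv1 hv2 f g i]
  exact mul_le_mul_of_nonneg_left (sq_sum_moment_sub_le hΔv.le hρ hχ1 hχ2 _ _) hΔx.le
end

section
/- Suppose a nonnegative sequence (Hⁿ) satisfies H^{n+1} - Hⁿ ≤ -Δt κ H^{n+1} for all n ≥ 1 with κ > 0 and 0 < Δt ≤ Δt_max. Then for all n ≥ 1, H^{n+1} ≤ H¹ e^{-β tⁿ}, where tⁿ = nΔt and β = log(1 + Δt_max κ)/Δt_max. -/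
/-!
Implicit Euler gives `H (n+1) * (1 + Δt κ) ≤ H n`, hence `H (n+1) ≤ H 1 * (1 + Δt κ)⁻ⁿ`.
Writing `(1 + Δt κ)⁻ⁿ = exp (-(log (1 + Δt κ) / Δt) * (n Δt))`, it remains to compare rates:
`s ↦ log (1 + s κ) / s` is nonincreasing on `(0, ∞)` (Bernoulli's inequality for exponents in
`[0, 1]`), so the rate at `Δt` dominates the rate `β` at `Δtmax ≥ Δt`.
-/

open Real

theorem antitoneOn_log_one_add_mul_div {κ : ℝ} (hκ : 0 ≤ κ) :
    AntitoneOn (fun s => log (1 + s * κ) / s) (Set.Ioi 0) := by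
  intro s (hs : 0 < s) t (ht : 0 < t) hst
  have hbernoulli : (1 + t * κ) ^ (s / t) ≤ 1 + s * κ := by
    calc (1 + t * κ) ^ (s / t) ≤ 1 + s / t * (t * κ) :=
          rpow_one_add_le_one_add_mul_self (by nlinarith) (by positivity)
            ((div_le_one ht).2 hst)
      _ = 1 + s * κ := by field_simp
  have hlog : s / t * log (1 + t * κ) ≤ log (1 + s * κ) := by
    rw [← log_rpow (by positivity)]
    exact log_le_log (by positivity) hbernoulli
  show log (1 + t * κ) / t ≤ log (1 + s * κ) / s
  rw [div_le_div_iff₀ ht hs]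
  rw [div_mul_eq_mul_div, div_le_iff₀ ht] at hlog
  linarith

theorem mul_pow_le_of_forall_succ_mul_le {u : ℕ → ℝ} {c : ℝ} {m : ℕ} (hc : 0 ≤ c)
    (hstep : ∀ n ≥ m, u (n + 1) * c ≤ u n) (k : ℕ) : u (m + k) * c ^ k ≤ u m := by
  induction k with
  | zero => simp
  | succ k ih =>
    calc u (m + (k + 1)) * c ^ (k + 1) = u (m + k + 1) * c * c ^ k := by ring_nf
      _ ≤ u (m + k) * c ^ k := by gcongr; exact hstep _ (Nat.le_add_right m k)
      _ ≤ u m := ih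

theorem inv_pow_eq_exp_neg_log_div_mul {c : ℝ} (hc : 0 < c) {Δt : ℝ} (hΔt : Δt ≠ 0) (n : ℕ) :
    (c ^ n)⁻¹ = exp (-(log c / Δt) * (n * Δt)) := by
  rw [show -(log c / Δt) * (n * Δt) = -(n * log c) by field_simp, exp_neg, exp_nat_mul,
    exp_log hc]

/-- Discrete Gronwall lemma for implicit Euler entropy dissipation. -/
theorem discrete_gronwall_exponential (H : ℕ → ℝ) (hH : ∀ n, 0 ≤ H n)
    (κ Δt Δtmax : ℝ) (hκ : 0 < κ) (hΔt : 0 < Δt) (hΔtmax : Δt ≤ Δtmax)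
    (hdecay : ∀ n ≥ 1, H (n + 1) - H n ≤ -(Δt * κ * H (n + 1))) :
    ∀ n ≥ 1, H (n + 1) ≤ H 1 *
      Real.exp (-(Real.log (1 + Δtmax * κ) / Δtmax) * (n * Δt)) := by
  intro n _
  have hc : 0 < 1 + Δt * κ := by positivity
  have hstep : ∀ n ≥ 1, H (n + 1) * (1 + Δt * κ) ≤ H n := fun n hn => by
    linarith [hdecay n hn]
  have hpow : H (n + 1) * (1 + Δt * κ) ^ n ≤ H 1 := by
    simpa [add_comm] using mul_pow_le_of_forall_succ_mul_le hc.le hstep n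
  have hrate : log (1 + Δtmax * κ) / Δtmax ≤ log (1 + Δt * κ) / Δt :=
    antitoneOn_log_one_add_mul_div hκ.le hΔt (hΔt.trans_le hΔtmax) hΔtmax
  calc H (n + 1) ≤ H 1 * ((1 + Δt * κ) ^ n)⁻¹ := by
        rwa [le_mul_inv_iff₀ (by positivity)]
    _ = H 1 * exp (-(log (1 + Δt * κ) / Δt) * (n * Δt)) := by
        rw [inv_pow_eq_exp_neg_log_div_mul hc hΔt.ne']
    _ ≤ H 1 * exp (-(log (1 + Δtmax * κ) / Δtmax) * (n * Δt)) := by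
        gcongr
        exact hH 1
end
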